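/- arXiv:0807.0280 — 2 statements merged into one kernel-verified Lean document; each statement's English description precedes it below -/
import Mathlib

section
/- For H ∈ (0,1), the function R_H(t,s) = (1/2)(t^{2H} + s^{2H} - |t-s|^{2H}) is positive semidefinite on ℝ≥0: for any finite collection t_1,…,t_n ≥ 0 and reals a_1,…,a_n, we have ∑_{i,j} a_i a_j R_H(t_i,t_j) ≥ 0. -/
/-! With `C_α = ∫₀^∞ (1 - cos x) x^(-1-α) dx`, which is finite and positive for `0 < α < 2`,
the substitution `x ↦ x / |u|` gives `|u|^α C_α = ∫₀^∞ (1 - cos (u x)) x^(-1-α) dx`.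
Since `(1 - cos a) + (1 - cos b) - (1 - cos (a - b)) = (1 - cos a)(1 - cos b) + sin a sin b`,
this writes `2 C_{2H} R_H(t, s)` as the integral, against the positive weight `x^(-1-2H) dx`, of
the Gram kernel of the two functions `t ↦ 1 - cos (t x)` and `t ↦ sin (t x)`. Its quadratic form
is a sum of two squares at every `x`. -/

noncomputable def RH (H t s : ℝ) : ℝ :=
  (1 / 2) * (t ^ (2 * H) + s ^ (2 * H) - |t - s| ^ (2 * H))

open MeasureTheory Real Set

theorem integrableOn_one_sub_cos_mul_mul_rpow {α : ℝ} (h0 : 0 < α) (h2 : α < 2) (u : ℝ) :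
    IntegrableOn (fun x ↦ (1 - cos (u * x)) * x ^ (-1 - α)) (Ioi 0) := by
  have hmeas : ∀ s ⊆ Ioi (0 : ℝ), MeasurableSet s →
      AEStronglyMeasurable (fun x ↦ (1 - cos (u * x)) * x ^ (-1 - α)) (volume.restrict s) :=
    fun s hs hsm ↦ ContinuousOn.aestronglyMeasurable (by
      refine ContinuousOn.mul (by fun_prop) (continuousOn_id.rpow_const fun x hx ↦ ?_)
      exact Or.inl (hs hx).ne') hsm
  have hnear : IntegrableOn (fun x ↦ (1 - cos (u * x)) * x ^ (-1 - α)) (Ioc 0 1) := by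
    have hpow : IntegrableOn (fun x : ℝ ↦ x ^ (1 - α)) (Ioc 0 1) :=
      (intervalIntegrable_iff_integrableOn_Ioc_of_le zero_le_one).1
        (intervalIntegral.intervalIntegrable_rpow' (by linarith))
    refine (hpow.const_mul (u ^ 2 / 2)).mono' (hmeas _ Ioc_subset_Ioi_self measurableSet_Ioc) ?_
    filter_upwards [ae_restrict_mem measurableSet_Ioc] with x hx
    have hx0 : 0 < x := hx.1
    have hcos : 1 - cos (u * x) ≤ u ^ 2 / 2 * x ^ (2 : ℝ) := by
      rw [rpow_two]; linarith [one_sub_sq_div_two_le_cos (x := u * x)]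
    rw [norm_of_nonneg (mul_nonneg (by linarith [cos_le_one (u * x)]) (by positivity))]
    calc (1 - cos (u * x)) * x ^ (-1 - α) ≤ u ^ 2 / 2 * x ^ (2 : ℝ) * x ^ (-1 - α) := by gcongr
      _ = u ^ 2 / 2 * x ^ (1 - α) := by rw [mul_assoc, ← rpow_add hx0]; ring_nf
  have hfar : IntegrableOn (fun x ↦ (1 - cos (u * x)) * x ^ (-1 - α)) (Ioi 1) := by
    refine ((integrableOn_Ioi_rpow_of_lt (a := -1 - α) (by linarith) one_pos).const_mul 2).mono'
      (hmeas _ (Ioi_subset_Ioi zero_le_one) measurableSet_Ioi) ?_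
    filter_upwards [ae_restrict_mem measurableSet_Ioi] with x hx
    have hx0 : 0 < x := one_pos.trans hx
    rw [norm_of_nonneg (mul_nonneg (by linarith [cos_le_one (u * x)]) (by positivity))]
    gcongr
    linarith [neg_one_le_cos (u * x)]
  rw [← Ioc_union_Ioi_eq_Ioi zero_le_one]
  exact hnear.union hfar

noncomputable def oneSubCosIntegral (α : ℝ) : ℝ :=
  ∫ x in Ioi 0, (1 - cos x) * x ^ (-1 - α)

theorem oneSubCosIntegral_pos {α : ℝ} (h0 : 0 < α) (h2 : α < 2) : 0 < oneSubCosIntegral α := by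
  have hint := integrableOn_one_sub_cos_mul_mul_rpow h0 h2 1
  simp only [one_mul] at hint
  have hpos : ∀ x ∈ Ioo 0 π, 0 < (1 - cos x) * x ^ (-1 - α) := fun x hx ↦
    mul_pos (by linarith [cos_lt_cos_of_nonneg_of_le_pi le_rfl hx.2.le hx.1, cos_zero])
      (rpow_pos_of_pos hx.1 _)
  rw [oneSubCosIntegral, setIntegral_pos_iff_support_of_nonneg_ae ?_ hint]
  · have hsupp : Ioo 0 π ⊆ Function.support (fun x ↦ (1 - cos x) * x ^ (-1 - α)) ∩ Ioi 0 :=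
      fun x hx ↦ ⟨(hpos x hx).ne', hx.1⟩
    refine (measure_mono hsupp).trans_lt' ?_
    simp [pi_pos]
  · filter_upwards [ae_restrict_mem measurableSet_Ioi] with x hx
    exact mul_nonneg (by linarith [cos_le_one x]) (rpow_nonneg (le_of_lt hx) _)

theorem integral_one_sub_cos_mul_mul_rpow_of_pos (α : ℝ) {u : ℝ} (hu : 0 < u) :
    ∫ x in Ioi 0, (1 - cos (u * x)) * x ^ (-1 - α) = u ^ α * oneSubCosIntegral α := by
  have hsubst := integral_comp_mul_left_Ioi (fun y ↦ (1 - cos y) * y ^ (-1 - α)) 0 hu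
  rw [mul_zero, smul_eq_mul] at hsubst
  calc ∫ x in Ioi 0, (1 - cos (u * x)) * x ^ (-1 - α)
      = ∫ x in Ioi 0, u ^ (1 + α) * ((1 - cos (u * x)) * (u * x) ^ (-1 - α)) := by
        refine setIntegral_congr_fun measurableSet_Ioi fun x hx ↦ ?_
        have hcancel : u ^ (1 + α) * u ^ (-1 - α) = 1 := by rw [← rpow_add hu]; norm_num
        rw [mul_rpow hu.le (le_of_lt hx)]
        linear_combination (-(1 - cos (u * x)) * x ^ (-1 - α)) * hcancel
    _ = u ^ (1 + α) * (u⁻¹ * oneSubCosIntegral α) := by rw [integral_const_mul, hsubst]; rfl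
    _ = u ^ α * oneSubCosIntegral α := by
        rw [← mul_assoc, ← rpow_neg_one u, ← rpow_add hu]
        norm_num

theorem integral_one_sub_cos_mul_mul_rpow {α : ℝ} (hα : α ≠ 0) (u : ℝ) :
    ∫ x in Ioi 0, (1 - cos (u * x)) * x ^ (-1 - α) = |u| ^ α * oneSubCosIntegral α := by
  rcases eq_or_ne u 0 with rfl | hu
  · simp [zero_rpow hα]
  rw [← integral_one_sub_cos_mul_mul_rpow_of_pos α (abs_pos.2 hu)]
  rcases abs_choice u with h | h <;> simp only [h, neg_mul, cos_neg]

noncomputable def spectralIntegrand (α t s x : ℝ) : ℝ :=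
  ((1 - cos (t * x)) * (1 - cos (s * x)) + sin (t * x) * sin (s * x)) * x ^ (-1 - α)

theorem spectralIntegrand_eq (α t s x : ℝ) :
    spectralIntegrand α t s x = (1 - cos (t * x)) * x ^ (-1 - α) + (1 - cos (s * x)) * x ^ (-1 - α)
      - (1 - cos ((t - s) * x)) * x ^ (-1 - α) := by
  rw [spectralIntegrand, sub_mul t s x, cos_sub]
  ring

theorem integrableOn_spectralIntegrand {α : ℝ} (h0 : 0 < α) (h2 : α < 2) (t s : ℝ) :
    IntegrableOn (spectralIntegrand α t s) (Ioi 0) := by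
  simp only [funext (spectralIntegrand_eq α t s)]
  exact ((integrableOn_one_sub_cos_mul_mul_rpow h0 h2 t).add
    (integrableOn_one_sub_cos_mul_mul_rpow h0 h2 s)).sub
    (integrableOn_one_sub_cos_mul_mul_rpow h0 h2 (t - s))

theorem integral_spectralIntegrand {α : ℝ} (h0 : 0 < α) (h2 : α < 2) (t s : ℝ) :
    ∫ x in Ioi 0, spectralIntegrand α t s x
      = (|t| ^ α + |s| ^ α - |t - s| ^ α) * oneSubCosIntegral α := by
  have hint := integrableOn_one_sub_cos_mul_mul_rpow h0 h2
  simp only [spectralIntegrand_eq]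
  rw [integral_sub, integral_add, integral_one_sub_cos_mul_mul_rpow h0.ne',
    integral_one_sub_cos_mul_mul_rpow h0.ne', integral_one_sub_cos_mul_mul_rpow h0.ne']
  · ring
  exacts [hint t, hint s, (hint t).add (hint s), hint (t - s)]

theorem sum_sum_mul_mul_add_mul_eq {ι : Type*} [Fintype ι] (a f g : ι → ℝ) :
    ∑ i, ∑ j, a i * a j * (f i * f j + g i * g j)
      = (∑ i, a i * f i) ^ 2 + (∑ i, a i * g i) ^ 2 := by
  simp only [sq, Finset.sum_mul_sum, ← Finset.sum_add_distrib]
  exact Finset.sum_congr rfl fun i _ ↦ Finset.sum_congr rfl fun j _ ↦ by ring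

theorem sum_sum_mul_spectralIntegrand {ι : Type*} [Fintype ι] (α x : ℝ) (a t : ι → ℝ) :
    ∑ i, ∑ j, a i * a j * spectralIntegrand α (t i) (t j) x
      = ((∑ i, a i * (1 - cos (t i * x))) ^ 2 + (∑ i, a i * sin (t i * x)) ^ 2)
        * x ^ (-1 - α) := by
  simp only [spectralIntegrand, ← mul_assoc, ← Finset.sum_mul]
  rw [← sum_sum_mul_mul_add_mul_eq]

theorem sum_sum_mul_integral_nonneg {X ι : Type*} [MeasurableSpace X] [Fintype ι] {μ : Measure X}
    {k : ι → ι → X → ℝ} (hk : ∀ i j, Integrable (k i j) μ) (a : ι → ℝ)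
    (hpos : ∀ᵐ x ∂μ, 0 ≤ ∑ i, ∑ j, a i * a j * k i j x) :
    0 ≤ ∑ i, ∑ j, a i * a j * ∫ x, k i j x ∂μ := by
  have hk' : ∀ i j, Integrable (fun x ↦ a i * a j * k i j x) μ :=
    fun i j ↦ (hk i j).const_mul _
  have hswap : ∑ i, ∑ j, a i * a j * ∫ x, k i j x ∂μ
      = ∫ x, ∑ i, ∑ j, a i * a j * k i j x ∂μ := by
    rw [integral_finsetSum _ fun i _ ↦ integrable_finsetSum _ fun j _ ↦ hk' i j]
    simp only [integral_finsetSum _ fun j _ ↦ hk' _ j, integral_const_mul]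
  exact hswap ▸ integral_nonneg_of_ae hpos

/-- The fBm covariance function is positive semidefinite on ℝ≥0. -/
theorem RH_posSemidef (H : ℝ) (hH : H ∈ Set.Ioo (0 : ℝ) 1)
    (n : ℕ) (t : Fin n → ℝ) (ht : ∀ i, 0 ≤ t i) (a : Fin n → ℝ) :
    0 ≤ ∑ i, ∑ j, a i * a j * RH H (t i) (t j) := by
  have h0 : 0 < 2 * H := by linarith [hH.1]
  have h2 : 2 * H < 2 := by linarith [hH.2]
  set C := oneSubCosIntegral (2 * H) with hC_def
  have hC : 0 < C := oneSubCosIntegral_pos h0 h2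
  have hRH : ∀ i j, RH H (t i) (t j)
      = (2 * C)⁻¹ * ∫ x in Ioi 0, spectralIntegrand (2 * H) (t i) (t j) x := by
    intro i j
    rw [integral_spectralIntegrand h0 h2, ← hC_def, abs_of_nonneg (ht i), abs_of_nonneg (ht j), RH]
    field_simp
  simp_rw [hRH, mul_left_comm _ (2 * C)⁻¹, ← Finset.mul_sum]
  refine mul_nonneg (by positivity) (sum_sum_mul_integral_nonneg
    (fun i j ↦ integrableOn_spectralIntegrand h0 h2 (t i) (t j)) a ?_)
  filter_upwards [ae_restrict_mem measurableSet_Ioi] with x hx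
  rw [sum_sum_mul_spectralIntegrand]
  exact mul_nonneg (by positivity) (rpow_nonneg (le_of_lt hx) _)
end

section
/- For H ∈ (1/2,1), let c_H² = H(2H−1)/B(2−2H, H−1/2) and K_H(t,u) = c_H u^{1/2−H} ∫_u^t (r−u)^{H−3/2} r^{H−1/2} dr; then for t > 0, ∫_0^t K_H(t,u)² du = t^{2H}. -/
open MeasureTheory intervalIntegral

/-- Beta function via the Gamma function. -/
noncomputable def realBeta (x y : ℝ) : ℝ :=
  Real.Gamma x * Real.Gamma y / Real.Gamma (x + y)

open Set
open scoped ENNReal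

lemma realBeta_integral {a b : ℝ} (ha : 0 < a) (hb : 0 < b) :
    ∫ x in (0:ℝ)..1, x ^ (a - 1) * (1 - x) ^ (b - 1) = realBeta a b := by
  have hG : 0 < Real.Gamma (a + b) := Real.Gamma_pos_of_pos (by linarith)
  have key := Complex.Gamma_mul_Gamma_eq_betaIntegral
    (s := (a : ℂ)) (t := (b : ℂ)) (by simpa using ha) (by simpa using hb)
  have hcongr : Complex.betaIntegral (a : ℂ) (b : ℂ)
      = ((∫ x in (0:ℝ)..1, x ^ (a - 1) * (1 - x) ^ (b - 1) : ℝ) : ℂ) := by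
    rw [Complex.betaIntegral, ← intervalIntegral.integral_ofReal]
    refine intervalIntegral.integral_congr fun x hx => ?_
    rw [Set.uIcc_of_le (by norm_num : (0:ℝ) ≤ 1)] at hx
    push_cast
    rw [Complex.ofReal_cpow hx.1, Complex.ofReal_cpow (by linarith [hx.2])]
    push_cast
    ring
  rw [hcongr] at key
  have key2 : Real.Gamma a * Real.Gamma b
      = Real.Gamma (a + b) * ∫ x in (0:ℝ)..1, x ^ (a - 1) * (1 - x) ^ (b - 1) := by
    have := key
    rw [Complex.Gamma_ofReal, Complex.Gamma_ofReal, ← Complex.ofReal_add,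
      Complex.Gamma_ofReal, ← Complex.ofReal_mul, ← Complex.ofReal_mul] at this
    exact_mod_cast this
  rw [realBeta]
  field_simp
  linarith [key2]

lemma intervalIntegrable_beta {a b : ℝ} (ha : 0 < a) (hb : 0 < b) :
    IntervalIntegrable (fun x => x ^ (a - 1) * (1 - x) ^ (b - 1)) volume 0 1 := by
  apply IntervalIntegrable.trans (b := 1/2)
  · refine (intervalIntegrable_rpow' (by linarith)).mul_continuousOn ?_
    refine ContinuousOn.rpow_const (by fun_prop) fun x hx => Or.inl ?_
    rw [Set.uIcc_of_le (by norm_num : (0:ℝ) ≤ 1/2)] at hx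
    have := hx.2
    intro h; linarith [sub_eq_zero.mp h]
  · have h1 : IntervalIntegrable (fun x => (1 - x) ^ (b - 1)) volume (1/2) 1 := by
      have := (intervalIntegrable_rpow' (r := b - 1) (by linarith)
        (a := 0) (b := 1/2)).comp_sub_left 1
      norm_num at this
      exact this.symm
    refine h1.continuousOn_mul ?_
    refine ContinuousOn.rpow_const (by fun_prop) fun x hx => Or.inl ?_
    rw [Set.uIcc_of_le (by norm_num : (1/2:ℝ) ≤ 1)] at hx
    have := hx.1
    intro h; linarith

lemma lintegral_beta {a b : ℝ} (ha : 0 < a) (hb : 0 < b) :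
    ∫⁻ x in Set.Ioo (0:ℝ) 1, ENNReal.ofReal (x ^ (a - 1) * (1 - x) ^ (b - 1))
      = ENNReal.ofReal (realBeta a b) := by
  rw [← realBeta_integral ha hb, intervalIntegral.integral_of_le zero_le_one,
    integral_Ioc_eq_integral_Ioo]
  refine (ofReal_integral_eq_lintegral_ofReal ?_ ?_).symm
  · exact ((intervalIntegrable_beta ha hb).1).mono_set Set.Ioo_subset_Ioc_self
  · refine (ae_restrict_iff' measurableSet_Ioo).2 (Filter.Eventually.of_forall fun x hx => ?_)
    exact mul_nonneg (Real.rpow_nonneg hx.1.le _) (Real.rpow_nonneg (by linarith [hx.2]) _)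

lemma rpow_algebra {H r s w : ℝ} (hr : 0 < r) (hs : 0 < s) (hrs : 0 < r - s)
    (hw : 0 < w) (hw1 : 0 < 1 - w) (hD : 0 < r - s * w) :
    (r * s * (r - s) / (r - s * w) ^ 2) *
      ((r * s * (1 - w) / (r - s * w)) ^ (1 - 2*H) *
        ((r * (r - s) / (r - s * w)) ^ (H - 3/2) *
          ((s * w * (r - s) / (r - s * w)) ^ (H - 3/2))))
    = ((r * s) ^ ((1:ℝ)/2 - H) * (r - s) ^ (2*H - 2)) *
        (w ^ (H - 3/2) * (1 - w) ^ (1 - 2*H)) := by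
  have h1 : Real.log ((r * s * (1 - w) / (r - s * w)) ^ (1 - 2*H))
      = (1 - 2*H) * (Real.log r + Real.log s + Real.log (1 - w) - Real.log (r - s * w)) := by
    rw [Real.log_rpow (by positivity), Real.log_div (by positivity) hD.ne',
      Real.log_mul (by positivity) hw1.ne', Real.log_mul hr.ne' hs.ne']
  have h2 : Real.log ((r * (r - s) / (r - s * w)) ^ (H - 3/2))
      = (H - 3/2) * (Real.log r + Real.log (r - s) - Real.log (r - s * w)) := by
    rw [Real.log_rpow (by positivity), Real.log_div (by positivity) hD.ne',
      Real.log_mul hr.ne' hrs.ne']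
  have h3 : Real.log ((s * w * (r - s) / (r - s * w)) ^ (H - 3/2))
      = (H - 3/2) * (Real.log s + Real.log w + Real.log (r - s) - Real.log (r - s * w)) := by
    rw [Real.log_rpow (by positivity), Real.log_div (by positivity) hD.ne',
      Real.log_mul (by positivity) hrs.ne', Real.log_mul hs.ne' hw.ne']
  have h0 : Real.log (r * s * (r - s) / (r - s * w) ^ 2)
      = Real.log r + Real.log s + Real.log (r - s) - 2 * Real.log (r - s * w) := by
    rw [Real.log_div (by positivity) (by positivity), Real.log_mul (by positivity) hrs.ne',
      Real.log_mul hr.ne' hs.ne', Real.log_pow]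
    push_cast; ring
  apply Real.log_injOn_pos (Set.mem_Ioi.2 (by positivity)) (Set.mem_Ioi.2 (by positivity))
  rw [Real.log_mul (by positivity) (by positivity), Real.log_mul (by positivity) (by positivity),
    Real.log_mul (by positivity) (by positivity), h0, h1, h2, h3,
    Real.log_mul (by positivity) (by positivity), Real.log_mul (by positivity) (by positivity),
    Real.log_mul (by positivity) (by positivity),
    Real.log_rpow (by positivity), Real.log_rpow hrs, Real.log_rpow hw, Real.log_rpow hw1,
    Real.log_mul hr.ne' hs.ne']
  ring

lemma realBeta_comm (x y : ℝ) : realBeta x y = realBeta y x := by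
  unfold realBeta; rw [mul_comm (Real.Gamma x), add_comm]

lemma lintegral_image_1d {s : Set ℝ} {f f' : ℝ → ℝ} (hs : MeasurableSet s)
    (hf' : ∀ x ∈ s, HasDerivWithinAt f (f' x) s x) (hf : Set.InjOn f s) (g : ℝ → ℝ≥0∞) :
    ∫⁻ x in f '' s, g x = ∫⁻ x in s, ENNReal.ofReal |f' x| * g (f x) := by
  simpa only [ContinuousLinearMap.det_toSpanSingleton] using
    lintegral_image_eq_lintegral_abs_det_fderiv_mul volume hs
      (fun x hx => (hf' x hx).hasFDerivWithinAt) hf g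

lemma key_beta {H r s : ℝ} (h1 : 1/2 < H) (h2 : H < 1) (hs : 0 < s) (hsr : s < r) :
    ∫⁻ u in Set.Ioo 0 s,
        ENNReal.ofReal (u ^ (1 - 2*H) * ((r - u) ^ (H - 3/2) * (s - u) ^ (H - 3/2)))
      = ENNReal.ofReal (realBeta (2 - 2*H) (H - 1/2) *
          ((r*s) ^ ((1:ℝ)/2 - H) * (r - s) ^ (2*H - 2))) := by
  have hr : 0 < r := hs.trans hsr
  have hrs : 0 < r - s := by linarith
  set f : ℝ → ℝ := fun w => r * s * (1 - w) / (r - s * w) with hf_def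
  set f' : ℝ → ℝ := fun w => r * s * (s - r) / (r - s * w) ^ 2 with hf'_def
  have hD : ∀ w ∈ Set.Ioo (0:ℝ) 1, 0 < r - s * w := fun w hw => by nlinarith [hw.1, hw.2]
  have hderiv : ∀ w ∈ Set.Ioo (0:ℝ) 1, HasDerivWithinAt f (f' w) (Set.Ioo 0 1) w := by
    intro w hw
    have hDw := hD w hw
    have hnum : HasDerivAt (fun w : ℝ => r * s * (1 - w)) (-(r * s)) w := by
      simpa using ((hasDerivAt_id w).const_sub 1).const_mul (r * s)
    have hden : HasDerivAt (fun w : ℝ => r - s * w) (-s) w := by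
      simpa using ((hasDerivAt_id w).const_mul s).const_sub r
    have h3 := hnum.div hden hDw.ne'
    refine HasDerivAt.hasDerivWithinAt ?_
    exact (by simpa only [show (-(r * s) * (r - s * w) - r * s * (1 - w) * -s) = r * s * (s - r) from (by
      ring)] using h3 : HasDerivAt ((fun w : ℝ => r * s * (1 - w)) / fun w => r - s * w)
        (r * s * (s - r) / (r - s * w) ^ 2) w)
  have hinj : Set.InjOn f (Set.Ioo 0 1) := by
    intro w1 hw1 w2 hw2 heq
    have hD1 := hD w1 hw1
    have hD2 := hD w2 hw2
    simp only [hf_def] at heq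
    rw [div_eq_div_iff hD1.ne' hD2.ne'] at heq
    have key : (r * s * (r - s)) * (w2 - w1) = 0 := by linear_combination heq
    rcases mul_eq_zero.mp key with h | h
    · exact absurd h (by positivity)
    · linarith
  have him : f '' Set.Ioo 0 1 = Set.Ioo 0 s := by
    ext u
    simp only [Set.mem_image, Set.mem_Ioo]
    constructor
    · rintro ⟨w, ⟨hw0, hw1⟩, rfl⟩
      have hDw : 0 < r - s * w := hD w ⟨hw0, hw1⟩
      have h1w : 0 < 1 - w := by linarith
      constructor
      · positivity
      · rw [hf_def]
        simp only
        rw [div_lt_iff₀ hDw]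
        nlinarith [mul_pos (mul_pos hs hw0) hrs]
    · rintro ⟨hu0, hus⟩
      have hru : 0 < r - u := by linarith
      have hsu : 0 < s - u := by linarith
      refine ⟨r * (s - u) / (s * (r - u)), ⟨by positivity, ?_⟩, ?_⟩
      · rw [div_lt_one (by positivity)]
        nlinarith
      · have e1 : r - s * (r * (s - u) / (s * (r - u))) = r * (r - s) / (r - u) := by
          field_simp; ring
        have e2 : 1 - r * (s - u) / (s * (r - u)) = (r - s) * u / (s * (r - u)) := by
          field_simp; ring
        simp only [hf_def]
        rw [e1, e2]
        field_simp
  rw [← him, lintegral_image_1d measurableSet_Ioo hderiv hinj]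
  have hpt : ∀ w ∈ Set.Ioo (0:ℝ) 1,
      ENNReal.ofReal |f' w| * ENNReal.ofReal
          ((f w) ^ (1 - 2*H) * ((r - f w) ^ (H - 3/2) * (s - f w) ^ (H - 3/2)))
        = ENNReal.ofReal ((r*s) ^ ((1:ℝ)/2 - H) * (r - s) ^ (2*H - 2) *
            (w ^ (H - 3/2) * (1 - w) ^ (1 - 2*H))) := by
    intro w hw
    obtain ⟨hw0, hw1⟩ := hw
    have hw1' : 0 < 1 - w := by linarith
    have hDw : 0 < r - s * w := hD w ⟨hw0, hw1⟩
    have habs : |f' w| = r * s * (r - s) / (r - s * w) ^ 2 := by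
      rw [hf'_def]
      simp only
      rw [abs_div, abs_of_nonpos (by nlinarith [mul_pos (mul_pos hr hs) hrs]), abs_of_pos (by positivity)]
      ring
    have er : r - f w = r * (r - s) / (r - s * w) := by
      simp only [hf_def]; field_simp; ring
    have es : s - f w = s * w * (r - s) / (r - s * w) := by
      simp only [hf_def]; field_simp; ring
    rw [← ENNReal.ofReal_mul (abs_nonneg _), habs, er, es]
    congr 1
    exact rpow_algebra hr hs hrs hw0 hw1' hDw
  rw [setLIntegral_congr_fun measurableSet_Ioo hpt]
  have hC : 0 ≤ (r*s) ^ ((1:ℝ)/2 - H) * (r - s) ^ (2*H - 2) := by positivity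
  simp_rw [ENNReal.ofReal_mul hC]
  rw [lintegral_const_mul' _ _ ENNReal.ofReal_ne_top]
  have hb := lintegral_beta (a := H - 1/2) (b := 2 - 2*H) (by linarith) (by linarith)
  rw [show H - 1/2 - 1 = H - 3/2 from by ring, show 2 - 2*H - 1 = 1 - 2*H from by ring] at hb
  rw [hb, ← ENNReal.ofReal_mul hC, realBeta_comm, mul_comm]

lemma lint_ofReal_eq {s : Set ℝ} (hs : MeasurableSet s) {f : ℝ → ℝ}
    (hi : IntegrableOn f s) (hnn : ∀ x ∈ s, 0 ≤ f x) :
    ∫⁻ x in s, ENNReal.ofReal (f x) = ENNReal.ofReal (∫ x in s, f x) :=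
  (ofReal_integral_eq_lintegral_ofReal hi
    ((ae_restrict_iff' hs).2 (Filter.Eventually.of_forall hnn))).symm

lemma oneD {H t r : ℝ} (h1 : 1/2 < H) (h2 : H < 1) (hr : 0 < r) (hrt : r < t) :
    ∫⁻ x in Set.Ioo (0:ℝ) t, ENNReal.ofReal (|r - x| ^ (2*H - 2))
      = ENNReal.ofReal ((r ^ (2*H - 1) + (t - r) ^ (2*H - 1)) / (2*H - 1)) := by
  have hexp : (-1:ℝ) < 2*H - 2 := by linarith
  have hsplit : Set.Ioo (0:ℝ) t = Set.Ioo 0 r ∪ Set.Ico r t := by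
    rw [Set.Ioo_union_Ico_eq_Ioo hr (le_of_lt hrt)]
  have hdisj : Disjoint (Set.Ioo (0:ℝ) r) (Set.Ico r t) := by
    rw [Set.disjoint_left]
    rintro x ⟨_, hx2⟩ ⟨hx3, _⟩
    linarith
  rw [hsplit, lintegral_union measurableSet_Ico hdisj,
    setLIntegral_congr (MeasureTheory.Ioo_ae_eq_Ico (μ := volume) (a := r) (b := t)).symm]
  have e1 : ∫⁻ x in Set.Ioo (0:ℝ) r, ENNReal.ofReal (|r - x| ^ (2*H - 2))
      = ENNReal.ofReal (r ^ (2*H - 1) / (2*H - 1)) := by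
    rw [setLIntegral_congr_fun measurableSet_Ioo
      (fun x hx => by rw [abs_of_pos (by linarith [hx.2] : (0:ℝ) < r - x)])]
    rw [lint_ofReal_eq measurableSet_Ioo]
    · rw [← integral_Ioc_eq_integral_Ioo, ← intervalIntegral.integral_of_le hr.le,
        intervalIntegral.integral_comp_sub_left (fun x => x ^ (2*H - 2)) r]
      simp only [sub_self, sub_zero]
      rw [integral_rpow (Or.inl hexp)]
      norm_num
      rw [Real.zero_rpow (by linarith)]
      ring_nf
    · have := ((intervalIntegrable_rpow' hexp (a := 0) (b := r)).comp_sub_left r)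
      simp only [sub_self, sub_zero] at this
      exact this.symm.1.mono_set Set.Ioo_subset_Ioc_self
    · exact fun x hx => Real.rpow_nonneg (by linarith [hx.2]) _
  have e2 : ∫⁻ x in Set.Ioo r t, ENNReal.ofReal (|r - x| ^ (2*H - 2))
      = ENNReal.ofReal ((t - r) ^ (2*H - 1) / (2*H - 1)) := by
    rw [setLIntegral_congr_fun measurableSet_Ioo
      (fun x hx => by rw [abs_sub_comm, abs_of_pos (by linarith [hx.1] : (0:ℝ) < x - r)])]
    rw [lint_ofReal_eq measurableSet_Ioo]
    · rw [← integral_Ioc_eq_integral_Ioo, ← intervalIntegral.integral_of_le hrt.le,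
        intervalIntegral.integral_comp_sub_right (fun x => x ^ (2*H - 2)) r]
      simp only [sub_self]
      rw [integral_rpow (Or.inl hexp)]
      rw [Real.zero_rpow (by linarith)]
      ring_nf
    · have := ((intervalIntegrable_rpow' hexp (a := 0) (b := t - r)).comp_sub_right r)
      simp only [zero_add, sub_add_cancel] at this
      exact this.1.mono_set Set.Ioo_subset_Ioc_self
    · exact fun x hx => Real.rpow_nonneg (by linarith [hx.1]) _
  rw [e1, e2, ← ENNReal.ofReal_add
    (div_nonneg (Real.rpow_nonneg hr.le _) (by linarith))
    (div_nonneg (Real.rpow_nonneg (by linarith) _) (by linarith))]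
  congr 1
  ring

lemma finD {H t : ℝ} (h1 : 1/2 < H) (h2 : H < 1) (ht : 0 < t) :
    ∫⁻ r in Set.Ioo (0:ℝ) t,
        ENNReal.ofReal ((r ^ (2*H - 1) + (t - r) ^ (2*H - 1)) / (2*H - 1))
      = ENNReal.ofReal (t ^ (2*H) / (H * (2*H - 1))) := by
  have hexp : (-1:ℝ) < 2*H - 1 := by linarith
  have hi1 : IntervalIntegrable (fun r : ℝ => r ^ (2*H - 1)) volume 0 t :=
    intervalIntegrable_rpow' hexp
  have hi2 : IntervalIntegrable (fun r : ℝ => (t - r) ^ (2*H - 1)) volume 0 t := by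
    have := (intervalIntegrable_rpow' hexp (a := 0) (b := t)).comp_sub_left t
    simpa using this.symm
  rw [lint_ofReal_eq measurableSet_Ioo]
  · congr 1
    rw [← integral_Ioc_eq_integral_Ioo, ← intervalIntegral.integral_of_le ht.le]
    rw [intervalIntegral.integral_div, intervalIntegral.integral_add hi1 hi2,
      integral_rpow (Or.inl hexp),
      intervalIntegral.integral_comp_sub_left (fun x => x ^ (2*H - 1)) t]
    simp only [sub_self, sub_zero]
    rw [integral_rpow (Or.inl hexp), Real.zero_rpow (by linarith)]
    have he : 2*H - 1 + 1 = 2*H := by ring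
    rw [he]
    have hA : (2*H - 1) ≠ 0 := by intro h; linarith [sub_eq_zero.mp h]
    have hB : H ≠ 0 := by intro h; linarith
    have hC : (2*H) ≠ 0 := by intro h; linarith
    field_simp
    ring
  · exact ((hi1.add hi2).div_const _).1.mono_set Set.Ioo_subset_Ioc_self
  · intro x hx
    have ha1 : 0 ≤ x ^ (2*H - 1) := Real.rpow_nonneg hx.1.le _
    have ha2 : 0 ≤ (t - x) ^ (2*H - 1) := Real.rpow_nonneg (by linarith [hx.2]) _
    exact div_nonneg (by linarith) (by linarith)

lemma meas_rpow_const (c : ℝ) : Measurable fun x : ℝ => x ^ c := by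
  have h : (fun x : ℝ => x ^ c) = fun x =>
      if 0 < x then Real.exp (Real.log x * c)
      else if x = 0 then (if c = 0 then 1 else 0)
      else Real.exp (Real.log x * c) * Real.cos (c * Real.pi) := by
    funext x
    rcases lt_trichotomy x 0 with hx | hx | hx
    · rw [if_neg (by linarith), if_neg hx.ne, Real.rpow_def_of_neg hx, mul_comm c Real.pi]
    · subst hx
      by_cases hc : c = 0
      · simp [hc]
      · simp [hc, Real.zero_rpow hc]
    · rw [if_pos hx, Real.rpow_def_of_pos hx]
  rw [h]
  refine Measurable.ite measurableSet_Ioi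
    (Real.measurable_exp.comp (Real.measurable_log.mul_const c)) ?_
  exact Measurable.ite (measurableSet_singleton 0) measurable_const
    ((Real.measurable_exp.comp (Real.measurable_log.mul_const c)).mul_const _)

lemma g_intervalIntegrable {H u t : ℝ} (h1 : 1/2 < H) (hu : 0 < u) (hut : u < t) :
    IntervalIntegrable (fun r => (r - u) ^ (H - 3/2) * r ^ (H - 1/2)) volume u t := by
  have hf : IntervalIntegrable (fun r : ℝ => (r - u) ^ (H - 3/2)) volume u t := by
    have := (intervalIntegrable_rpow' (show (-1:ℝ) < H - 3/2 by linarith)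
      (a := 0) (b := t - u)).comp_sub_right u
    simpa using this
  exact hf.mul_continuousOn
    (ContinuousOn.rpow_const (by fun_prop) fun x _ => Or.inr (by linarith))

lemma psi_eq {H u t : ℝ} (h1 : 1/2 < H) (hu : 0 < u) (hut : u < t) :
    ∫⁻ r in Set.Ioo u t, ENNReal.ofReal ((r - u) ^ (H - 3/2) * r ^ (H - 1/2))
      = ENNReal.ofReal (∫ r in u..t, (r - u) ^ (H - 3/2) * r ^ (H - 1/2)) := by
  rw [intervalIntegral.integral_of_le hut.le, integral_Ioc_eq_integral_Ioo]
  exact lint_ofReal_eq measurableSet_Ioo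
    ((g_intervalIntegrable h1 hu hut).1.mono_set Set.Ioo_subset_Ioc_self)
    (fun r hr => mul_nonneg (Real.rpow_nonneg (by linarith [hr.1]) _)
      (Real.rpow_nonneg (by linarith [hr.1]) _))

lemma psi_meas {H t : ℝ} :
    Measurable (fun u => ∫⁻ r in Set.Ioo u t,
      ENNReal.ofReal ((r - u) ^ (H - 3/2) * r ^ (H - 1/2))) := by
  have hrw : ∀ u : ℝ, (∫⁻ r in Set.Ioo u t,
      ENNReal.ofReal ((r - u) ^ (H - 3/2) * r ^ (H - 1/2)))
      = ∫⁻ r, (Set.Ioo u t).indicator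
          (fun r => ENNReal.ofReal ((r - u) ^ (H - 3/2) * r ^ (H - 1/2))) r := by
    intro u
    rw [lintegral_indicator measurableSet_Ioo]
  simp_rw [hrw]
  apply Measurable.lintegral_prod_right (f := fun (u : ℝ) (r : ℝ) => (Set.Ioo u t).indicator
      (fun r => ENNReal.ofReal ((r - u) ^ (H - 3/2) * r ^ (H - 1/2))) r)
  have : (fun p : ℝ × ℝ => (Set.Ioo p.1 t).indicator
      (fun r => ENNReal.ofReal ((r - p.1) ^ (H - 3/2) * r ^ (H - 1/2))) p.2)
      = fun p : ℝ × ℝ => if p.1 < p.2 ∧ p.2 < t then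
          ENNReal.ofReal ((p.2 - p.1) ^ (H - 3/2) * p.2 ^ (H - 1/2)) else 0 := by
    funext p
    simp [Set.indicator_apply, Set.mem_Ioo]
  rw [Function.uncurry_def, this]
  apply Measurable.ite
  · exact ((measurableSet_lt measurable_fst measurable_snd).inter
      (measurableSet_lt measurable_snd measurable_const))
  · exact (((meas_rpow_const _).comp (measurable_snd.sub measurable_fst)).mul
      ((meas_rpow_const _).comp measurable_snd)).ennreal_ofReal
  · exact measurable_const

lemma key_beta_min {H r r' : ℝ} (h1 : 1/2 < H) (h2 : H < 1) (hr : 0 < r) (hr' : 0 < r')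
    (hne : r' ≠ r) :
    ∫⁻ u in Set.Ioo 0 (min r r'),
        ENNReal.ofReal (u ^ (1 - 2*H) * ((r - u) ^ (H - 3/2) * (r' - u) ^ (H - 3/2)))
      = ENNReal.ofReal (realBeta (2 - 2*H) (H - 1/2) *
          ((r*r') ^ ((1:ℝ)/2 - H) * |r - r'| ^ (2*H - 2))) := by
  rcases lt_or_gt_of_ne hne with h | h
  · rw [min_eq_right h.le, abs_of_pos (by linarith : (0:ℝ) < r - r')]
    exact key_beta h1 h2 hr' h
  · rw [min_eq_left h.le, abs_sub_comm, abs_of_pos (by linarith : (0:ℝ) < r' - r)]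
    have hcomm : ∀ u : ℝ, u ^ (1 - 2*H) * ((r - u) ^ (H - 3/2) * (r' - u) ^ (H - 3/2))
        = u ^ (1 - 2*H) * ((r' - u) ^ (H - 3/2) * (r - u) ^ (H - 3/2)) := fun u => by ring
    simp_rw [hcomm]
    rw [key_beta h1 h2 hr h, mul_comm r r']

/-- Diagonal case of the Dirichlet-type identity for the
Decreusefond–Üstünel kernel: ∫_0^t K_H(t,u)² du = t^{2H}. -/
theorem KH_diagonal_identity (H t : ℝ) (hH : H ∈ Set.Ioo (1/2 : ℝ) 1)
    (ht : 0 < t)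
    (c : ℝ) (hc : c = Real.sqrt (H * (2 * H - 1) / realBeta (2 - 2 * H) (H - 1/2))) :
    ∫ u in (0:ℝ)..t,
        (c * u ^ ((1:ℝ)/2 - H) *
          ∫ r in u..t, (r - u) ^ (H - 3/2) * r ^ (H - 1/2)) ^ 2
      = t ^ (2 * H) := by
  obtain ⟨h1, h2⟩ := hH
  have hBpos : 0 < realBeta (2 - 2 * H) (H - 1/2) := by
    have g1 : 0 < Real.Gamma (2 - 2*H) := Real.Gamma_pos_of_pos (by linarith)
    have g2 : 0 < Real.Gamma (H - 1/2) := Real.Gamma_pos_of_pos (by linarith)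
    have g3 : 0 < Real.Gamma (2 - 2*H + (H - 1/2)) := Real.Gamma_pos_of_pos (by linarith)
    exact div_pos (mul_pos g1 g2) g3
  have hc2 : c^2 * realBeta (2 - 2 * H) (H - 1/2) = H * (2 * H - 1) := by
    rw [hc, Real.sq_sqrt (div_nonneg (by nlinarith) hBpos.le)]
    exact div_mul_cancel₀ _ hBpos.ne'
  set ψ : ℝ → ℝ≥0∞ := fun u => ∫⁻ r in Set.Ioo u t,
    ENNReal.ofReal ((r - u) ^ (H - 3/2) * r ^ (H - 1/2)) with hψdef
  have hψm : Measurable ψ := psi_meas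
  have hψfin : ∀ u ∈ Set.Ioo (0:ℝ) t,
      ψ u = ENNReal.ofReal (∫ r in u..t, (r - u) ^ (H - 3/2) * r ^ (H - 1/2)) :=
    fun u hu => psi_eq h1 hu.1 hu.2
  have hJnn : ∀ u ∈ Set.Ioo (0:ℝ) t,
      0 ≤ ∫ r in u..t, (r - u) ^ (H - 3/2) * r ^ (H - 1/2) := by
    intro u hu
    apply intervalIntegral.integral_nonneg hu.2.le
    intro r hr
    exact mul_nonneg (Real.rpow_nonneg (by linarith [hr.1]) _)
      (Real.rpow_nonneg (by linarith [hu.1, hr.1]) _)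
  rw [intervalIntegral.integral_of_le ht.le, integral_Ioc_eq_integral_Ioo]
  have hrep : Set.EqOn
      (fun u => (c * u ^ ((1:ℝ)/2 - H) *
        ∫ r in u..t, (r - u) ^ (H - 3/2) * r ^ (H - 1/2)) ^ 2)
      (fun u => c^2 * u ^ (1 - 2*H) * ((ψ u).toReal)^2) (Set.Ioo 0 t) := by
    intro u hu
    simp only
    rw [hψfin u hu, ENNReal.toReal_ofReal (hJnn u hu)]
    have hsq : (u ^ ((1:ℝ)/2 - H))^2 = u ^ (1 - 2*H) := by
      rw [← Real.rpow_natCast (u ^ ((1:ℝ)/2 - H)) 2, ← Real.rpow_mul hu.1.le,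
        show ((1:ℝ)/2 - H) * ((2:ℕ):ℝ) = 1 - 2*H by push_cast; ring]
    rw [mul_pow, mul_pow, hsq]
  rw [setIntegral_congr_fun measurableSet_Ioo hrep]
  have hGm : Measurable fun u : ℝ => c^2 * u ^ (1 - 2*H) * ((ψ u).toReal)^2 :=
    (measurable_const.mul (meas_rpow_const _)).mul
      ((hψm.ennreal_toReal).pow_const 2)
  rw [integral_eq_lintegral_of_nonneg_ae
    ((ae_restrict_iff' measurableSet_Ioo).2 (Filter.Eventually.of_forall
      (fun u hu => by have hu0 : (0:ℝ) < u := hu.1; positivity)))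
    hGm.aestronglyMeasurable]
  -- Main lintegral computation
  have hL : (∫⁻ u in Set.Ioo (0:ℝ) t,
      ENNReal.ofReal (c^2 * u ^ (1 - 2*H) * ((ψ u).toReal)^2))
      = ENNReal.ofReal (t ^ (2 * H)) := by
    -- step 1: product form
    have st1 : (∫⁻ u in Set.Ioo (0:ℝ) t,
        ENNReal.ofReal (c^2 * u ^ (1 - 2*H) * ((ψ u).toReal)^2))
        = ∫⁻ u in Set.Ioo (0:ℝ) t,
            ENNReal.ofReal (c^2 * u ^ (1 - 2*H)) * (ψ u * ψ u) := by
      apply setLIntegral_congr_fun measurableSet_Ioo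
      refine fun u hu => ?_
      have hu0 : (0:ℝ) < u := hu.1
      have hA : 0 ≤ c^2 * u ^ (1 - 2*H) := by positivity
      dsimp only
      rw [hψfin u hu, ENNReal.toReal_ofReal (hJnn u hu),
        ← ENNReal.ofReal_mul (hJnn u hu), ← ENNReal.ofReal_mul hA]
      congr 1
      ring
    rw [st1]
    -- step 2: first swap
    set f₁ : ℝ × ℝ → ℝ≥0∞ := fun p =>
      if 0 < p.1 ∧ p.1 < p.2 ∧ p.2 < t then
        (ENNReal.ofReal (c^2 * p.1 ^ (1 - 2*H)) *
          ENNReal.ofReal ((p.2 - p.1) ^ (H - 3/2) * p.2 ^ (H - 1/2))) * ψ p.1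
      else 0 with hf₁
    have hf₁m : Measurable f₁ := by
      apply Measurable.ite
      · exact ((measurableSet_lt measurable_const measurable_fst).inter
          ((measurableSet_lt measurable_fst measurable_snd).inter
            (measurableSet_lt measurable_snd measurable_const)))
      · exact ((((meas_rpow_const _).comp measurable_fst).const_mul
            (c^2)).ennreal_ofReal.mul
          ((((meas_rpow_const _).comp (measurable_snd.sub measurable_fst)).mul
            ((meas_rpow_const _).comp measurable_snd)).ennreal_ofReal)).mul
          (hψm.comp measurable_fst)
      · exact measurable_const
    have hswap1 : (∫⁻ u in Set.Ioo (0:ℝ) t,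
        ENNReal.ofReal (c^2 * u ^ (1 - 2*H)) * (ψ u * ψ u))
        = ∫⁻ r in Set.Ioo (0:ℝ) t, ∫⁻ u in Set.Ioo 0 r,
            (ENNReal.ofReal (c^2 * u ^ (1 - 2*H)) *
              ENNReal.ofReal ((r - u) ^ (H - 3/2) * r ^ (H - 1/2))) * ψ u := by
      rw [← lintegral_indicator measurableSet_Ioo]
      have e1 : (∫⁻ u, (Set.Ioo (0:ℝ) t).indicator
          (fun u => ENNReal.ofReal (c^2 * u ^ (1 - 2*H)) * (ψ u * ψ u)) u)
          = ∫⁻ u, ∫⁻ r, f₁ (u, r) := by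
        apply lintegral_congr
        intro u
        by_cases hu : u ∈ Set.Ioo (0:ℝ) t
        · rw [Set.indicator_of_mem hu]
          have hpt : ∀ r, f₁ (u, r) = (Set.Ioo u t).indicator
              (fun r => (ENNReal.ofReal (c^2 * u ^ (1 - 2*H)) *
                ENNReal.ofReal ((r - u) ^ (H - 3/2) * r ^ (H - 1/2))) * ψ u) r := by
            intro r
            simp only [hf₁, Set.indicator_apply, Set.mem_Ioo]
            by_cases h : u < r ∧ r < t
            · rw [if_pos ⟨hu.1, h.1, h.2⟩, if_pos h]
            · rw [if_neg (fun hh => h ⟨hh.2.1, hh.2.2⟩), if_neg h]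
          simp_rw [hpt]
          rw [lintegral_indicator measurableSet_Ioo]
          have hfin : ψ u ≠ ⊤ := by rw [hψfin u hu]; exact ENNReal.ofReal_ne_top
          rw [lintegral_mul_const' (ψ u) _ hfin,
            lintegral_const_mul' _ _ ENNReal.ofReal_ne_top]
          exact (mul_assoc _ _ _).symm
        · rw [Set.indicator_of_notMem hu]
          symm
          have hz : ∀ r, f₁ (u, r) = 0 := by
            intro r
            simp only [hf₁]
            exact if_neg (fun hh => hu ⟨hh.1, hh.2.1.trans hh.2.2⟩)
          simp_rw [hz]
          exact lintegral_zero
      rw [e1, lintegral_lintegral_swap (hf₁m.aemeasurable)]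
      have e2 : ∀ r : ℝ, (∫⁻ u, f₁ (u, r))
          = (Set.Ioo (0:ℝ) t).indicator (fun r => ∫⁻ u in Set.Ioo 0 r,
              (ENNReal.ofReal (c^2 * u ^ (1 - 2*H)) *
                ENNReal.ofReal ((r - u) ^ (H - 3/2) * r ^ (H - 1/2))) * ψ u) r := by
        intro r
        by_cases hr : r ∈ Set.Ioo (0:ℝ) t
        · rw [Set.indicator_of_mem hr]
          have hpt : ∀ u, f₁ (u, r) = (Set.Ioo (0:ℝ) r).indicator
              (fun u => (ENNReal.ofReal (c^2 * u ^ (1 - 2*H)) *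
                ENNReal.ofReal ((r - u) ^ (H - 3/2) * r ^ (H - 1/2))) * ψ u) u := by
            intro u
            simp only [hf₁, Set.indicator_apply, Set.mem_Ioo]
            by_cases h : 0 < u ∧ u < r
            · rw [if_pos ⟨h.1, h.2, hr.2⟩, if_pos h]
            · rw [if_neg (fun hh => h ⟨hh.1, hh.2.1⟩), if_neg h]
          simp_rw [hpt]
          rw [lintegral_indicator measurableSet_Ioo]
        · rw [Set.indicator_of_notMem hr]
          have hz : ∀ u, f₁ (u, r) = 0 := by
            intro u
            simp only [hf₁]
            exact if_neg (fun hh => hr ⟨hh.1.trans hh.2.1, hh.2.2⟩)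
          simp_rw [hz]
          exact lintegral_zero
      simp_rw [e2]
      rw [lintegral_indicator measurableSet_Ioo]
    rw [hswap1]

    have hinner : ∀ r ∈ Set.Ioo (0:ℝ) t,
        (∫⁻ u in Set.Ioo (0:ℝ) r,
          (ENNReal.ofReal (c^2 * u ^ (1 - 2*H)) *
            ENNReal.ofReal ((r - u) ^ (H - 3/2) * r ^ (H - 1/2))) * ψ u)
        = ENNReal.ofReal (H * (2*H - 1)) *
            ENNReal.ofReal ((r ^ (2*H - 1) + (t - r) ^ (2*H - 1)) / (2*H - 1)) := by
      intro r hr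
      have ex1 : ∀ u ∈ Set.Ioo (0:ℝ) r,
          (ENNReal.ofReal (c^2 * u ^ (1 - 2*H)) *
            ENNReal.ofReal ((r - u) ^ (H - 3/2) * r ^ (H - 1/2))) * ψ u
          = ∫⁻ r' in Set.Ioo u t,
              (ENNReal.ofReal (c^2 * u ^ (1 - 2*H)) *
                ENNReal.ofReal ((r - u) ^ (H - 3/2) * r ^ (H - 1/2))) *
                ENNReal.ofReal ((r' - u) ^ (H - 3/2) * r' ^ (H - 1/2)) := by
        intro u hu
        exact (lintegral_const_mul' _ _
          (ENNReal.mul_ne_top ENNReal.ofReal_ne_top ENNReal.ofReal_ne_top)).symm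
      rw [setLIntegral_congr_fun measurableSet_Ioo ex1]
      set f₂ : ℝ × ℝ → ℝ≥0∞ := fun p =>
        if 0 < p.1 ∧ p.1 < r ∧ p.1 < p.2 ∧ p.2 < t then
          (ENNReal.ofReal (c^2 * p.1 ^ (1 - 2*H)) *
            ENNReal.ofReal ((r - p.1) ^ (H - 3/2) * r ^ (H - 1/2))) *
            ENNReal.ofReal ((p.2 - p.1) ^ (H - 3/2) * p.2 ^ (H - 1/2))
        else 0 with hf₂
      have hf₂m : Measurable f₂ := by
        apply Measurable.ite
        · exact ((measurableSet_lt measurable_const measurable_fst).inter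
            ((measurableSet_lt measurable_fst measurable_const).inter
              ((measurableSet_lt measurable_fst measurable_snd).inter
                (measurableSet_lt measurable_snd measurable_const))))
        · exact (((((meas_rpow_const _).comp measurable_fst).const_mul
              (c^2)).ennreal_ofReal).mul
            ((((meas_rpow_const _).comp (measurable_const.sub measurable_fst)).mul
              measurable_const).ennreal_ofReal)).mul
            ((((meas_rpow_const _).comp (measurable_snd.sub measurable_fst)).mul
              ((meas_rpow_const _).comp measurable_snd)).ennreal_ofReal)
        · exact measurable_const
      rw [← lintegral_indicator measurableSet_Ioo]
      have e1 : (∫⁻ u, (Set.Ioo (0:ℝ) r).indicator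
          (fun u => ∫⁻ r' in Set.Ioo u t,
            (ENNReal.ofReal (c^2 * u ^ (1 - 2*H)) *
              ENNReal.ofReal ((r - u) ^ (H - 3/2) * r ^ (H - 1/2))) *
              ENNReal.ofReal ((r' - u) ^ (H - 3/2) * r' ^ (H - 1/2))) u)
          = ∫⁻ u, ∫⁻ r', f₂ (u, r') := by
        apply lintegral_congr
        intro u
        by_cases hu : u ∈ Set.Ioo (0:ℝ) r
        · rw [Set.indicator_of_mem hu]
          have hpt : ∀ r', f₂ (u, r') = (Set.Ioo u t).indicator
              (fun r' => (ENNReal.ofReal (c^2 * u ^ (1 - 2*H)) *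
                ENNReal.ofReal ((r - u) ^ (H - 3/2) * r ^ (H - 1/2))) *
                ENNReal.ofReal ((r' - u) ^ (H - 3/2) * r' ^ (H - 1/2))) r' := by
            intro r'
            simp only [hf₂, Set.indicator_apply, Set.mem_Ioo]
            by_cases h : u < r' ∧ r' < t
            · rw [if_pos ⟨hu.1, hu.2, h.1, h.2⟩, if_pos h]
            · rw [if_neg (fun hh => h ⟨hh.2.2.1, hh.2.2.2⟩), if_neg h]
          simp_rw [hpt]
          rw [lintegral_indicator measurableSet_Ioo]
        · rw [Set.indicator_of_notMem hu]
          symm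
          have hz : ∀ r', f₂ (u, r') = 0 := by
            intro r'
            simp only [hf₂]
            exact if_neg (fun hh => hu ⟨hh.1, hh.2.1⟩)
          simp_rw [hz]
          exact lintegral_zero
      rw [e1, lintegral_lintegral_swap hf₂m.aemeasurable]
      have e2 : ∀ r' : ℝ, (∫⁻ u, f₂ (u, r'))
          = (Set.Ioo (0:ℝ) t).indicator (fun r' => ∫⁻ u in Set.Ioo 0 (min r r'),
              (ENNReal.ofReal (c^2 * u ^ (1 - 2*H)) *
                ENNReal.ofReal ((r - u) ^ (H - 3/2) * r ^ (H - 1/2))) *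
                ENNReal.ofReal ((r' - u) ^ (H - 3/2) * r' ^ (H - 1/2))) r' := by
        intro r'
        by_cases hr' : r' ∈ Set.Ioo (0:ℝ) t
        · rw [Set.indicator_of_mem hr']
          have hpt : ∀ u, f₂ (u, r') = (Set.Ioo (0:ℝ) (min r r')).indicator
              (fun u => (ENNReal.ofReal (c^2 * u ^ (1 - 2*H)) *
                ENNReal.ofReal ((r - u) ^ (H - 3/2) * r ^ (H - 1/2))) *
                ENNReal.ofReal ((r' - u) ^ (H - 3/2) * r' ^ (H - 1/2))) u := by
            intro u
            simp only [hf₂, Set.indicator_apply, Set.mem_Ioo]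
            by_cases h : 0 < u ∧ u < min r r'
            · rw [if_pos ⟨h.1, (lt_min_iff.mp h.2).1, (lt_min_iff.mp h.2).2, hr'.2⟩,
                if_pos h]
            · rw [if_neg (fun hh => h ⟨hh.1, lt_min hh.2.1 hh.2.2.1⟩), if_neg h]
          simp_rw [hpt]
          rw [lintegral_indicator measurableSet_Ioo]
        · rw [Set.indicator_of_notMem hr']
          have hz : ∀ u, f₂ (u, r') = 0 := by
            intro u
            simp only [hf₂]
            exact if_neg (fun hh => hr' ⟨hh.1.trans hh.2.2.1, hh.2.2.2⟩)
          simp_rw [hz]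
          exact lintegral_zero
      simp_rw [e2]
      rw [lintegral_indicator measurableSet_Ioo]
      have hne_ae : ∀ᵐ (x : ℝ) ∂(volume : Measure ℝ), x ≠ r := by
        rw [ae_iff]
        simp only [Classical.not_not, Set.setOf_eq_eq_singleton]
        exact measure_singleton r
      have hkey : ∀ r' ∈ Set.Ioo (0:ℝ) t, r' ≠ r →
          (∫⁻ u in Set.Ioo (0:ℝ) (min r r'),
            (ENNReal.ofReal (c^2 * u ^ (1 - 2*H)) *
              ENNReal.ofReal ((r - u) ^ (H - 3/2) * r ^ (H - 1/2))) *
              ENNReal.ofReal ((r' - u) ^ (H - 3/2) * r' ^ (H - 1/2)))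
          = ENNReal.ofReal (H * (2*H - 1) * |r - r'| ^ (2*H - 2)) := by
        intro r' hr' hne
        have hmerge : ∀ u ∈ Set.Ioo (0:ℝ) (min r r'),
            (ENNReal.ofReal (c^2 * u ^ (1 - 2*H)) *
              ENNReal.ofReal ((r - u) ^ (H - 3/2) * r ^ (H - 1/2))) *
              ENNReal.ofReal ((r' - u) ^ (H - 3/2) * r' ^ (H - 1/2))
            = ENNReal.ofReal (c^2 * r ^ (H - 1/2) * r' ^ (H - 1/2)) *
                ENNReal.ofReal (u ^ (1 - 2*H) *
                  ((r - u) ^ (H - 3/2) * (r' - u) ^ (H - 3/2))) := by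
          intro u hu
          have hu0 : (0:ℝ) < u := hu.1
          have hx1 : 0 ≤ c^2 * u ^ (1 - 2*H) := by positivity
          have hru : (0:ℝ) ≤ r - u := by
            have := hu.2; have := min_le_left r r'; linarith [lt_min_iff.mp hu.2]
          have hx2 : 0 ≤ c^2 * u ^ (1 - 2*H) * ((r - u) ^ (H - 3/2) * r ^ (H - 1/2)) :=
            mul_nonneg hx1 (mul_nonneg (Real.rpow_nonneg hru _)
              (Real.rpow_nonneg hr.1.le _))
          have hx3 : 0 ≤ c^2 * r ^ (H - 1/2) * r' ^ (H - 1/2) := by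
            have := hr.1; have hr'0 : (0:ℝ) < r' := lt_of_le_of_lt hu.1.le
              (lt_min_iff.mp hu.2).2
            positivity
          rw [← ENNReal.ofReal_mul hx1, ← ENNReal.ofReal_mul hx2,
            ← ENNReal.ofReal_mul hx3]
          congr 1
          ring
        rw [setLIntegral_congr_fun measurableSet_Ioo hmerge,
          lintegral_const_mul' _ _ ENNReal.ofReal_ne_top,
          key_beta_min h1 h2 hr.1 hr'.1 hne]
        have hx3 : 0 ≤ c^2 * r ^ (H - 1/2) * r' ^ (H - 1/2) := by
          have := hr.1; have := hr'.1; positivity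
        rw [← ENNReal.ofReal_mul hx3]
        congr 1
        have hone : r ^ (H - 1/2) * r' ^ (H - 1/2) * (r*r') ^ ((1:ℝ)/2 - H) = 1 := by
          rw [Real.mul_rpow hr.1.le hr'.1.le, show (1:ℝ)/2 - H = -(H - 1/2) by ring,
            Real.rpow_neg hr.1.le, Real.rpow_neg hr'.1.le]
          have h0r : (0:ℝ) < r := hr.1
          have h0r' : (0:ℝ) < r' := hr'.1
          field_simp
        rw [show c^2 * r ^ (H - 1/2) * r' ^ (H - 1/2) *
            (realBeta (2 - 2*H) (H - 1/2) *
              ((r*r') ^ ((1:ℝ)/2 - H) * |r - r'| ^ (2*H - 2)))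
          = (c^2 * realBeta (2 - 2*H) (H - 1/2)) *
              (r ^ (H - 1/2) * r' ^ (H - 1/2) * (r*r') ^ ((1:ℝ)/2 - H)) *
              |r - r'| ^ (2*H - 2) from by ring, hc2, hone, mul_one]
      rw [lintegral_congr_ae (by
        filter_upwards [ae_restrict_of_ae hne_ae, ae_restrict_mem measurableSet_Ioo]
          with r' hne hmem
        exact hkey r' hmem hne)]
      have hsplit : ∀ r' : ℝ, ENNReal.ofReal (H * (2*H - 1) * |r - r'| ^ (2*H - 2))
          = ENNReal.ofReal (H * (2*H - 1)) * ENNReal.ofReal (|r - r'| ^ (2*H - 2)) :=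
        fun r' => ENNReal.ofReal_mul (by nlinarith)
      simp_rw [hsplit]
      rw [lintegral_const_mul' _ _ ENNReal.ofReal_ne_top, oneD h1 h2 hr.1 hr.2]
    rw [setLIntegral_congr_fun measurableSet_Ioo hinner,
      lintegral_const_mul' _ _ ENNReal.ofReal_ne_top, finD h1 h2 ht,
      ← ENNReal.ofReal_mul (by nlinarith)]
    congr 1
    rw [mul_comm (H * (2*H - 1)), div_mul_cancel₀ _
      (ne_of_gt (by nlinarith : (0:ℝ) < H * (2*H - 1)))]
  rw [hL, ENNReal.toReal_ofReal (Real.rpow_nonneg ht.le _)]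
end
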